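/- arXiv:1712.06483 — 3 statements merged into one kernel-verified Lean document; each statement's English description precedes it below -/
import Mathlib

section
/- Let G be a graph with threshold functions τ and τ′ satisfying τ′(v) ≤ τ(v) − 1 for every vertex v. Then dyn_{τ′}(G) ≤ dyn_τ(G) − 1. -/
open SimpleGraph

/-- One step of the activation process: add every vertex having at least `τ v` active neighbors. -/
def activStep {V : Type*} (G : SimpleGraph V) (τ : V → ℕ) (A : Set V) : Set V :=
  A ∪ {v | τ v ≤ (G.neighborSet v ∩ A).ncard}

/-- `D` is a `τ`-dynamic monopoly: iterating the activation process from `D` activates all of `V`. -/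
def IsDynMonopoly {V : Type*} (G : SimpleGraph V) (τ : V → ℕ) (D : Set V) : Prop :=
  ∃ k : ℕ, (activStep G τ)^[k] D = Set.univ

/-- The `τ`-dynamic monopoly number: least cardinality of a `τ`-dynamic monopoly. -/
noncomputable def dynNum {V : Type*} (G : SimpleGraph V) (τ : V → ℕ) : ℕ :=
  sInf {k | ∃ D : Set V, IsDynMonopoly G τ D ∧ D.ncard = k}

/-- Dynamic monopoly number with constant threshold `t`. -/
noncomputable def dynNumC {V : Type*} (G : SimpleGraph V) (t : ℕ) : ℕ :=
  dynNum G (fun _ => t)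

/-!
Removing any vertex `u` from a minimum `τ`-dynamic monopoly `D` leaves a `τ'`-dynamic monopoly.
Step by step, the `τ'`-process started at `D \ {u}` contains everything the `τ`-process started
at `D` has activated, except possibly `u`: missing `u` costs a vertex at most one active neighbour,
and its threshold has dropped by one. Once every vertex but `u` is active, all neighbours of `u`
are active, and `τ' u ≤ deg u` activates `u` as well.
-/

section Activation

variable {V : Type*} (G : SimpleGraph V) {τ τ' : V → ℕ}

lemma activStep_sdiff_singleton_subset [Finite V] (hlt : ∀ v, τ' v < τ v) (u : V)
    {A A' : Set V} (h : A \ {u} ⊆ A') :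
    activStep G τ A \ {u} ⊆ activStep G τ' A' := by
  rintro v ⟨hv | hv, hvu⟩
  · exact Or.inl (h ⟨hv, hvu⟩)
  · right
    have hsub : (G.neighborSet v ∩ A) \ {u} ⊆ G.neighborSet v ∩ A' := by
      rw [Set.inter_sdiff_assoc]
      exact Set.inter_subset_inter_right _ h
    calc τ' v ≤ τ v - 1 := Nat.le_sub_one_of_lt (hlt v)
      _ ≤ (G.neighborSet v ∩ A).ncard - 1 := Nat.sub_le_sub_right hv 1
      _ ≤ ((G.neighborSet v ∩ A) \ {u}).ncard := Set.pred_ncard_le_ncard_sdiff_singleton _ _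
      _ ≤ (G.neighborSet v ∩ A').ncard := Set.ncard_le_ncard hsub

lemma iterate_activStep_sdiff_singleton_subset [Finite V] (hlt : ∀ v, τ' v < τ v) (u : V)
    {A A' : Set V} (h : A \ {u} ⊆ A') (k : ℕ) :
    (activStep G τ)^[k] A \ {u} ⊆ (activStep G τ')^[k] A' := by
  induction k generalizing A A' with
  | zero => exact h
  | succ k ih => exact ih (activStep_sdiff_singleton_subset G hlt u h)

lemma activStep_eq_univ_of_compl_singleton_subset {u : V}
    (hu : τ u ≤ (G.neighborSet u).ncard) {A : Set V} (h : {u}ᶜ ⊆ A) :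
    activStep G τ A = Set.univ := by
  refine Set.eq_univ_of_forall fun v => ?_
  by_cases hvu : v = u
  · subst hvu
    have hN : G.neighborSet v ⊆ A := fun w hw => h (G.ne_of_adj hw).symm
    exact Or.inr (by simpa [Set.inter_eq_left.mpr hN] using hu)
  · exact Or.inl (h hvu)

lemma IsDynMonopoly.sdiff_singleton [Finite V] {D : Set V} (hD : IsDynMonopoly G τ D)
    (hlt : ∀ v, τ' v < τ v) {u : V} (hu : τ' u ≤ (G.neighborSet u).ncard) :
    IsDynMonopoly G τ' (D \ {u}) := by
  obtain ⟨k, hk⟩ := hD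
  have hcompl : {u}ᶜ ⊆ (activStep G τ')^[k] (D \ {u}) := by
    have h := iterate_activStep_sdiff_singleton_subset G hlt u (subset_refl (D \ {u})) k
    rwa [hk, ← Set.compl_eq_univ_sdiff] at h
  refine ⟨k + 1, ?_⟩
  rw [Function.iterate_succ_apply']
  exact activStep_eq_univ_of_compl_singleton_subset G hu hcompl

end Activation

section DynNum

variable {V : Type*} (G : SimpleGraph V) (τ : V → ℕ)

lemma dynNum_le_ncard {D : Set V} (hD : IsDynMonopoly G τ D) : dynNum G τ ≤ D.ncard :=
  Nat.sInf_le ⟨D, hD, rfl⟩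

lemma exists_isDynMonopoly_ncard_eq_dynNum :
    ∃ D : Set V, IsDynMonopoly G τ D ∧ D.ncard = dynNum G τ :=
  Nat.sInf_mem (s := {k | ∃ D : Set V, IsDynMonopoly G τ D ∧ D.ncard = k})
    ⟨_, Set.univ, ⟨0, rfl⟩, rfl⟩

end DynNum

theorem dyn_threshold_decrease_general {V : Type*} [Fintype V] (G : SimpleGraph V)
    (τ τ' : V → ℕ)
    (hτ' : ∀ v, τ' v ≤ (G.neighborSet v).ncard)
    (hle : ∀ v, τ' v + 1 ≤ τ v)
    (hd : 1 ≤ dynNum G τ) :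
    dynNum G τ' ≤ dynNum G τ - 1 := by
  obtain ⟨D, hD, hcard⟩ := exists_isDynMonopoly_ncard_eq_dynNum G τ
  obtain ⟨u, hu⟩ : D.Nonempty := Set.nonempty_of_ncard_ne_zero (by omega)
  calc dynNum G τ' ≤ (D \ {u}).ncard := dynNum_le_ncard G τ' (hD.sdiff_singleton G hle (hτ' u))
    _ = dynNum G τ - 1 := by rw [Set.ncard_sdiff_singleton_of_mem hu, hcard]

/-- If `τ'(v) ≤ τ(v) − 1` for every vertex `v` (both being valid threshold assignments),
then `dyn_{τ'}(G) ≤ dyn_τ(G) − 1`. -/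
theorem dyn_threshold_decrease {V : Type*} [Fintype V] [Nonempty V] (G : SimpleGraph V)
    (τ τ' : V → ℕ)
    (hτ : ∀ v, τ v ≤ (G.neighborSet v).ncard)
    (hτ' : ∀ v, τ' v ≤ (G.neighborSet v).ncard)
    (hle : ∀ v, τ' v + 1 ≤ τ v)
    (hd : 1 ≤ dynNum G τ) :
    dynNum G τ' ≤ dynNum G τ - 1 :=
  dyn_threshold_decrease_general G τ τ' hτ' hle hd
end

section
/- Let G be a connected graph with minimum degree δ(G) ≥ 2 and let d = dyn_2(G). Then for any n ≥ 3, dyn_2(G □ C_n) ≤ n + d − 2. -/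
open SimpleGraph

section Aux

variable {V W : Type*} {G : SimpleGraph V} {H : SimpleGraph W} {τ : V → ℕ} {t : ℕ} {A B : Set V}

lemma subset_activStep : A ⊆ activStep G τ A := Set.subset_union_left

lemma activStep_mono [Finite V] (h : A ⊆ B) : activStep G τ A ⊆ activStep G τ B := by
  intro v hv
  rcases hv with hv | hv
  · exact Or.inl (h hv)
  · exact Or.inr
      (le_trans hv (Set.ncard_le_ncard (Set.inter_subset_inter_right _ h) (Set.toFinite _)))

lemma iterate_mono [Finite V] (k : ℕ) (h : A ⊆ B) :
    (activStep G τ)^[k] A ⊆ (activStep G τ)^[k] B := by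
  induction k generalizing A B with
  | zero => exact h
  | succ k ih =>
    rw [Function.iterate_succ_apply, Function.iterate_succ_apply]
    exact ih (activStep_mono h)

lemma subset_iterate (k : ℕ) : A ⊆ (activStep G τ)^[k] A := by
  induction k with
  | zero => rfl
  | succ k ih =>
    rw [Function.iterate_succ_apply']
    exact ih.trans subset_activStep

lemma iterate_le_iterate [Finite V] {k l : ℕ} (h : k ≤ l) :
    (activStep G τ)^[k] A ⊆ (activStep G τ)^[l] A := by
  obtain ⟨m, rfl⟩ := Nat.exists_eq_add_of_le h
  rw [Function.iterate_add_apply]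
  exact iterate_mono k (subset_iterate m)

/-- If each member of `T ⊆ N(v)` with `τ v ≤ |T|` is eventually active, so is `v`. -/
lemma eventually_of_neighbors [Finite V] {v : V} {T : Set V}
    (hT : T ⊆ G.neighborSet v) (hcard : τ v ≤ T.ncard)
    (hact : ∀ w ∈ T, ∃ k, w ∈ (activStep G τ)^[k] A) :
    ∃ k, v ∈ (activStep G τ)^[k] A := by
  classical
  have := Fintype.ofFinite V
  choose f hf using fun w (hw : w ∈ T) => hact w hw
  set K := Finset.univ.sup (fun w : V => if h : w ∈ T then f w h else 0) with hK
  refine ⟨K + 1, ?_⟩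
  rw [Function.iterate_succ_apply']
  refine Or.inr (le_trans hcard (Set.ncard_le_ncard ?_ (Set.toFinite _)))
  intro w hw
  refine ⟨hT hw, ?_⟩
  have hle : f w hw ≤ K := by
    have := Finset.le_sup (f := fun w : V => if h : w ∈ T then f w h else 0)
      (Finset.mem_univ w)
    simpa [hw] using this
  exact iterate_le_iterate hle (hf w hw)

lemma isDynMonopoly_of_forall [Finite V] (h : ∀ v, ∃ k, v ∈ (activStep G τ)^[k] A) :
    IsDynMonopoly G τ A := by
  classical
  have := Fintype.ofFinite V
  choose f hf using h
  exact ⟨Finset.univ.sup f, Set.eq_univ_of_forall fun v =>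
    iterate_le_iterate (Finset.le_sup (Finset.mem_univ v)) (hf v)⟩

lemma image_activStep_subset [Finite W] {ι : V → W} (hinj : Function.Injective ι)
    (hadj : ∀ v w, G.Adj v w → H.Adj (ι v) (ι w)) (A : Set V) :
    ι '' (activStep G (fun _ => t) A) ⊆ activStep H (fun _ => t) (ι '' A) := by
  rintro _ ⟨v, hv, rfl⟩
  rcases hv with hv | hv
  · exact Or.inl (Set.mem_image_of_mem _ hv)
  · refine Or.inr ?_
    have hsub : ι '' (G.neighborSet v ∩ A) ⊆ H.neighborSet (ι v) ∩ ι '' A := by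
      rintro _ ⟨w, ⟨hw1, hw2⟩, rfl⟩
      exact ⟨hadj v w hw1, Set.mem_image_of_mem _ hw2⟩
    calc (fun _ => t) (ι v) ≤ (G.neighborSet v ∩ A).ncard := hv
      _ = (ι '' (G.neighborSet v ∩ A)).ncard := (Set.ncard_image_of_injective _ hinj).symm
      _ ≤ _ := Set.ncard_le_ncard hsub (Set.toFinite _)

lemma image_iterate_subset [Finite W] {ι : V → W} (hinj : Function.Injective ι)
    (hadj : ∀ v w, G.Adj v w → H.Adj (ι v) (ι w)) (k : ℕ) (A : Set V) :
    ι '' ((activStep G (fun _ => t))^[k] A) ⊆ (activStep H (fun _ => t))^[k] (ι '' A) := by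
  induction k generalizing A with
  | zero => exact le_refl _
  | succ k ih =>
    rw [Function.iterate_succ_apply, Function.iterate_succ_apply]
    exact (ih _).trans (iterate_mono k (image_activStep_subset hinj hadj A))

lemma spread_walk {P : V → Prop} (hstep : ∀ v w, G.Adj v w → P v → P w) :
    ∀ {a b : V}, G.Walk a b → P a → P b := by
  intro a b p
  induction p with
  | nil => exact id
  | cons h _ ih => exact fun ha => ih (hstep _ _ h ha)

lemma cycle_adj_succ {n : ℕ} [NeZero n] (hn : 2 ≤ n) (i : Fin n) :
    (cycleGraph n).Adj i (i + 1) := by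
  rw [cycleGraph_adj']
  right
  have h1 : i + 1 - i = 1 := add_sub_cancel_left i 1
  rw [h1]
  show (1 : Fin n).val = 1
  rw [Fin.val_one']
  exact Nat.mod_eq_of_lt (by omega)

end Aux

/-- For a connected graph `G` with minimum degree at least 2 and `n ≥ 3`,
`dyn₂(G □ C_n) ≤ n + dyn₂(G) − 2`. -/
theorem dyn2_boxProd_cycle {V : Type*} [Fintype V] (G : SimpleGraph V)
    (hconn : G.Connected) (hδ : ∀ v, 2 ≤ (G.neighborSet v).ncard)
    (n : ℕ) (hn : 3 ≤ n) :
    dynNumC (G.boxProd (cycleGraph n)) 2 ≤ n + dynNumC G 2 - 2 := by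
  classical
  haveI : NeZero n := ⟨by omega⟩
  obtain ⟨u⟩ := hconn.nonempty
  -- a minimum 2-dynamic monopoly of `G`
  have hne : {k | ∃ D : Set V, IsDynMonopoly G (fun _ => 2) D ∧ D.ncard = k}.Nonempty :=
    ⟨Set.univ.ncard, Set.univ, ⟨0, rfl⟩, rfl⟩
  obtain ⟨D, hD, hDcard⟩ := Nat.sInf_mem hne
  set GH := G.boxProd (cycleGraph n) with hGH
  set ι : V → V × Fin n := fun v => (v, (0 : Fin n)) with hι_def
  have hι : Function.Injective ι := fun a b h => congrArg Prod.fst h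
  set last : Fin n := ⟨n - 1, by omega⟩ with hlast_def
  set I : Set (Fin n) := {i | i ≠ 0 ∧ i ≠ last} with hI_def
  set S : Set (V × Fin n) := (ι '' D) ∪ ((fun i => ((u, i) : V × Fin n)) '' I) with hS_def
  have hadj : ∀ v w, G.Adj v w → GH.Adj (ι v) (ι w) := fun v w h => Or.inl ⟨h, rfl⟩
  -- layer 0 is eventually active
  have Ev0 : ∀ v : V, ∃ k, ι v ∈ (activStep GH (fun _ => 2))^[k] S := by
    obtain ⟨k, hk⟩ := hD
    intro v
    refine ⟨k, ?_⟩
    have h1 := image_iterate_subset (H := GH) (t := 2) hι hadj k D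
    have h2 := iterate_mono (G := GH) (τ := fun _ => 2) k
      (Set.subset_union_left : ι '' D ⊆ S)
    exact h2 (h1 ⟨v, by rw [hk]; trivial, rfl⟩)
  -- the column of `u` is eventually active
  have Evu : ∀ i : Fin n, ∃ k, ((u, i) : V × Fin n) ∈ (activStep GH (fun _ => 2))^[k] S := by
    intro i
    by_cases h0 : i = 0
    · subst h0; exact Ev0 u
    by_cases hl : i = last
    · subst hl
      set prev : Fin n := ⟨n - 2, by omega⟩ with hprev_def
      have hprev0 : prev ≠ 0 := by simp [hprev_def, Fin.ext_iff]; omega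
      have hprevl : prev ≠ last := by simp [hprev_def, hlast_def, Fin.ext_iff]; omega
      have hlast1 : last + 1 = 0 := by
        rw [Fin.ext_iff, Fin.val_add, Fin.val_one']
        show (n - 1 + 1 % n) % n = (0 : Fin n).val
        rw [Fin.val_zero, Nat.mod_eq_of_lt (show 1 < n by omega),
          Nat.sub_add_cancel (by omega), Nat.mod_self]
      have hprev1 : prev + 1 = last := by
        rw [Fin.ext_iff, Fin.val_add, Fin.val_one']
        show (n - 2 + 1 % n) % n = n - 1
        rw [Nat.mod_eq_of_lt (show 1 < n by omega),
          show n - 2 + 1 = n - 1 by omega, Nat.mod_eq_of_lt (show n - 1 < n by omega)]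
      have hadj1 : GH.Adj (u, last) (u, (0 : Fin n)) := by
        refine Or.inr ⟨?_, rfl⟩
        have := cycle_adj_succ (by omega) last
        rwa [hlast1] at this
      have hadj2 : GH.Adj (u, last) (u, prev) := by
        refine Or.inr ⟨?_, rfl⟩
        have := cycle_adj_succ (n := n) (by omega) prev
        rw [hprev1] at this
        exact this.symm
      refine eventually_of_neighbors (T := {((u, (0:Fin n)) : V × Fin n), (u, prev)})
        ?_ ?_ ?_
      · rintro w (rfl | rfl)
        · exact hadj1
        · exact hadj2
      · rw [Set.ncard_pair (by simp [Prod.ext_iff]; exact fun h => (hprev0 h.symm).elim)]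
      · rintro w (rfl | rfl)
        · exact Ev0 u
        · exact ⟨0, Or.inr ⟨prev, ⟨hprev0, hprevl⟩, rfl⟩⟩
    · exact ⟨0, Or.inr ⟨i, ⟨h0, hl⟩, rfl⟩⟩
  -- every layer is eventually active, by induction
  have layer : ∀ j : ℕ, ∀ (hj : j < n), ∀ v : V,
      ∃ k, ((v, (⟨j, hj⟩ : Fin n)) : V × Fin n) ∈ (activStep GH (fun _ => 2))^[k] S := by
    intro j
    induction j with
    | zero =>
      intro hj v
      have : (⟨0, hj⟩ : Fin n) = 0 := by simp [Fin.ext_iff]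
      rw [this]
      exact Ev0 v
    | succ j ih =>
      intro hj v
      have hjn : j < n := by omega
      have hsucc : (⟨j, hjn⟩ : Fin n) + 1 = ⟨j + 1, hj⟩ := by
        rw [Fin.ext_iff, Fin.val_add, Fin.val_one']
        show (j + 1 % n) % n = j + 1
        rw [Nat.mod_eq_of_lt (show 1 < n by omega), Nat.mod_eq_of_lt hj]
      have hstep : ∀ a b, G.Adj a b →
          (∃ k, ((a, (⟨j+1, hj⟩ : Fin n)) : V × Fin n) ∈ (activStep GH (fun _ => 2))^[k] S) →
          (∃ k, ((b, (⟨j+1, hj⟩ : Fin n)) : V × Fin n) ∈ (activStep GH (fun _ => 2))^[k] S) := by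
        intro a b hab hEva
        refine eventually_of_neighbors
          (T := {((a, (⟨j+1, hj⟩ : Fin n)) : V × Fin n), (b, (⟨j, hjn⟩ : Fin n))}) ?_ ?_ ?_
        · rintro w (rfl | rfl)
          · exact Or.inl ⟨hab.symm, rfl⟩
          · refine Or.inr ⟨?_, rfl⟩
            have := cycle_adj_succ (n := n) (by omega) ⟨j, hjn⟩
            rw [hsucc] at this
            exact this.symm
        · rw [Set.ncard_pair (by simp [Prod.ext_iff, Fin.ext_iff])]
        · rintro w (rfl | rfl)
          · exact hEva
          · exact ih hjn b
      obtain ⟨p⟩ := hconn u v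
      exact spread_walk hstep p (Evu ⟨j + 1, hj⟩)
  -- hence S is a dynamic monopoly
  have hmono : IsDynMonopoly GH (fun _ => 2) S := by
    refine isDynMonopoly_of_forall ?_
    rintro ⟨v, i⟩
    have := layer i.val i.isLt v
    simpa using this
  -- cardinality bound
  have hcard : S.ncard ≤ dynNumC G 2 + (n - 2) := by
    have h1 : (ι '' D).ncard = dynNumC G 2 := by
      rw [Set.ncard_image_of_injective _ hι, hDcard]; rfl
    have h0last : (0 : Fin n) ≠ last := by simp [hlast_def, Fin.ext_iff]; omega
    have hI : I = Set.univ \ {0, last} := by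
      ext i
      simp [hI_def, Set.mem_diff]
    have h2 : I.ncard = n - 2 := by
      rw [hI, Set.ncard_diff (by simp) (Set.toFinite _), Set.ncard_univ,
        Nat.card_eq_fintype_card, Fintype.card_fin, Set.ncard_pair h0last]
    have h3 : ((fun i => ((u, i) : V × Fin n)) '' I).ncard = n - 2 := by
      rw [Set.ncard_image_of_injective _ (fun a b h => congrArg Prod.snd h), h2]
    calc S.ncard ≤ (ι '' D).ncard + ((fun i => ((u, i) : V × Fin n)) '' I).ncard :=
          Set.ncard_union_le _ _
      _ = dynNumC G 2 + (n - 2) := by rw [h1, h3]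
  have hle : dynNumC GH 2 ≤ S.ncard := Nat.sInf_le ⟨S, hmono, rfl⟩
  calc dynNumC GH 2 ≤ dynNumC G 2 + (n - 2) := hle.trans hcard
    _ ≤ n + dynNumC G 2 - 2 := by omega
end

section
/- Let n ≥ 3 and 3 ≤ t ≤ n. Then dyn_t(K_{1,n} □ K_{1,n}) = n², i.e., equality holds in the product bound dyn_t(G □ H) ≤ dyn_t(G)·dyn_t(H) since dyn_t(K_{1,n}) = n. -/
open SimpleGraph

/-!
Every leaf–leaf vertex of `K_{1,n} □ K_{1,n}` has degree `2 < t`, so it can never gain `t` active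
neighbours and must lie in every dynamic monopoly. Conversely the `n²` leaf–leaf vertices form a
dynamic monopoly: the leaves of a star activate its centre in one step since `t ≤ n`, and in a box
product `D₁ × D₂` activates everything `D₁` and `D₂` activate, one coordinate at a time. The same
argument with the leaves of degree `1` gives `dyn_t(K_{1,n}) = n`.
-/

open Set

section Activation

variable {V : Type*} (G : SimpleGraph V) (τ : V → ℕ)

lemma mem_activStep_of_subset {A S : Set V} {v : V} [Finite V]
    (hS : S ⊆ G.neighborSet v ∩ A) (h : τ v ≤ S.ncard) : v ∈ activStep G τ A :=
  Or.inr (h.trans (ncard_le_ncard hS))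

lemma notMem_iterate_activStep_of_ncard_lt [Finite V] {D : Set V} {v : V}
    (hv : (G.neighborSet v).ncard < τ v) (hvD : v ∉ D) (k : ℕ) :
    v ∉ (activStep G τ)^[k] D := by
  induction k with
  | zero => exact hvD
  | succ k ih =>
    rw [Function.iterate_succ_apply']
    rintro (h | h)
    · exact ih h
    · exact (h.trans (ncard_le_ncard inter_subset_left)).not_gt hv

variable {G τ}

lemma IsDynMonopoly.mem_of_ncard_neighborSet_lt [Finite V] {D : Set V}
    (hD : IsDynMonopoly G τ D) {v : V} (hv : (G.neighborSet v).ncard < τ v) : v ∈ D := by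
  by_contra hvD
  obtain ⟨k, hk⟩ := hD
  exact notMem_iterate_activStep_of_ncard_lt G τ hv hvD k (hk ▸ mem_univ v)

lemma dynNum_eq_ncard [Finite V] {D : Set V} (hD : IsDynMonopoly G τ D)
    (hlow : ∀ v ∈ D, (G.neighborSet v).ncard < τ v) : dynNum G τ = D.ncard := by
  refine le_antisymm (Nat.sInf_le ⟨D, hD, rfl⟩) (le_csInf ⟨_, D, hD, rfl⟩ ?_)
  rintro _ ⟨E, hE, rfl⟩
  exact ncard_le_ncard fun v hv => hE.mem_of_ncard_neighborSet_lt (hlow v hv)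

end Activation

section BoxProd

variable {V W : Type*} {G : SimpleGraph V} {H : SimpleGraph W}

lemma ncard_neighborSet_boxProd_le (x : V × W) :
    ((G □ H).neighborSet x).ncard ≤ (G.neighborSet x.1).ncard + (H.neighborSet x.2).ncard := by
  rw [neighborSet_boxProd]
  refine (ncard_union_le _ _).trans ?_
  rw [ncard_prod, ncard_prod, ncard_singleton, ncard_singleton, mul_one, one_mul]

variable [Finite V] [Finite W] (t : ℕ)

lemma mk_mem_activStep_boxProd_of_left {A : Set (V × W)} {B : Set V} {w : W}
    (hB : ∀ u ∈ B, (u, w) ∈ A) {v : V} (hv : v ∈ activStep G (fun _ => t) B) :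
    (v, w) ∈ activStep (G □ H) (fun _ => t) A := by
  rcases hv with hv | hv
  · exact Or.inl (hB v hv)
  · refine mem_activStep_of_subset _ _ (S := (G.neighborSet v ∩ B) ×ˢ {w}) ?_ ?_
    · rintro ⟨u, _⟩ ⟨⟨huv, hu⟩, rfl⟩
      exact ⟨boxProd_adj.2 (Or.inl ⟨huv, rfl⟩), hB u hu⟩
    · rwa [ncard_prod, ncard_singleton, mul_one]

lemma mk_mem_activStep_boxProd_of_right {A : Set (V × W)} {B : Set W} {v : V}
    (hB : ∀ u ∈ B, (v, u) ∈ A) {w : W} (hw : w ∈ activStep H (fun _ => t) B) :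
    (v, w) ∈ activStep (G □ H) (fun _ => t) A := by
  rcases hw with hw | hw
  · exact Or.inl (hB w hw)
  · refine mem_activStep_of_subset _ _ (S := {v} ×ˢ (H.neighborSet w ∩ B)) ?_ ?_
    · rintro ⟨_, u⟩ ⟨rfl, huw, hu⟩
      exact ⟨boxProd_adj.2 (Or.inr ⟨huw, rfl⟩), hB u hu⟩
    · rwa [ncard_prod, ncard_singleton, one_mul]

lemma prod_iterate_activStep_subset (D₁ : Set V) (D₂ : Set W) (k l : ℕ) :
    (activStep G (fun _ => t))^[k] D₁ ×ˢ (activStep H (fun _ => t))^[l] D₂ ⊆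
      (activStep (G □ H) (fun _ => t))^[k + l] (D₁ ×ˢ D₂) := by
  induction k with
  | zero =>
    induction l with
    | zero => simp
    | succ l ih =>
      rw [Nat.zero_add] at ih
      rintro ⟨v, w⟩ ⟨hv, hw⟩
      rw [Function.iterate_succ_apply'] at hw
      rw [Nat.zero_add, Function.iterate_succ_apply']
      exact mk_mem_activStep_boxProd_of_right t (fun u hu => ih ⟨hv, hu⟩) hw
  | succ k ih =>
    rintro ⟨v, w⟩ ⟨hv, hw⟩
    rw [Function.iterate_succ_apply'] at hv
    rw [Nat.succ_add, Function.iterate_succ_apply']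
    exact mk_mem_activStep_boxProd_of_left t (fun u hu => ih ⟨hu, hw⟩) hv

lemma IsDynMonopoly.boxProd {D₁ : Set V} {D₂ : Set W} (h₁ : IsDynMonopoly G (fun _ => t) D₁)
    (h₂ : IsDynMonopoly H (fun _ => t) D₂) : IsDynMonopoly (G □ H) (fun _ => t) (D₁ ×ˢ D₂) := by
  obtain ⟨k, hk⟩ := h₁
  obtain ⟨l, hl⟩ := h₂
  refine ⟨k + l, eq_univ_of_univ_subset ?_⟩
  simpa only [hk, hl, univ_prod_univ] using prod_iterate_activStep_subset (G := G) (H := H) t D₁ D₂ k l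

end BoxProd

section CompleteBipartite

variable {V W : Type*}

lemma neighborSet_completeBipartiteGraph_inl (v : V) :
    (completeBipartiteGraph V W).neighborSet (Sum.inl v) = range Sum.inr := by
  ext (u | u) <;> simp

lemma neighborSet_completeBipartiteGraph_inr (w : W) :
    (completeBipartiteGraph V W).neighborSet (Sum.inr w) = range Sum.inl := by
  ext (u | u) <;> simp

lemma isDynMonopoly_completeBipartiteGraph_range_inr {t : ℕ} (h : t ≤ Nat.card W) :
    IsDynMonopoly (completeBipartiteGraph V W) (fun _ => t) (range Sum.inr) := by
  refine ⟨1, eq_univ_of_forall ?_⟩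
  rintro (v | w)
  · refine Or.inr (show t ≤ _ from ?_)
    rwa [neighborSet_completeBipartiteGraph_inl, inter_self,
      ncard_range_of_injective Sum.inr_injective]
  · exact Or.inl ⟨w, rfl⟩

end CompleteBipartite

theorem dyn_star_boxProd_star_general (n t : ℕ) (ht : 3 ≤ t) (htn : t ≤ n) :
    dynNumC ((completeBipartiteGraph (Fin 1) (Fin n)).boxProd
        (completeBipartiteGraph (Fin 1) (Fin n))) t = n ^ 2 ∧
    dynNumC (completeBipartiteGraph (Fin 1) (Fin n)) t = n := by
  set S := completeBipartiteGraph (Fin 1) (Fin n)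
  have hS : IsDynMonopoly S (fun _ => t) (range Sum.inr) :=
    isDynMonopoly_completeBipartiteGraph_range_inr (by rwa [Nat.card_fin])
  have hleaf : ∀ v ∈ range (Sum.inr : Fin n → Fin 1 ⊕ Fin n), (S.neighborSet v).ncard = 1 := by
    rintro _ ⟨j, rfl⟩
    rw [neighborSet_completeBipartiteGraph_inr, ncard_range_of_injective Sum.inl_injective,
      Nat.card_unique]
  have hleaves : (range (Sum.inr : Fin n → Fin 1 ⊕ Fin n)).ncard = n := by
    rw [ncard_range_of_injective Sum.inr_injective, Nat.card_fin]
  constructor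
  · rw [dynNumC, dynNum_eq_ncard (hS.boxProd t hS), ncard_prod, hleaves, sq]
    rintro ⟨v, w⟩ ⟨hv, hw⟩
    have := ncard_neighborSet_boxProd_le (G := S) (H := S) (v, w)
    rw [hleaf v hv, hleaf w hw] at this
    omega
  · rw [dynNumC, dynNum_eq_ncard hS, hleaves]
    intro v hv
    rw [hleaf v hv]
    omega

/-- For `n ≥ 3` and `3 ≤ t ≤ n`, `dyn_t(K_{1,n} □ K_{1,n}) = n²`, so equality holds in the
product bound since `dyn_t(K_{1,n}) = n`. -/
theorem dyn_star_boxProd_star (n t : ℕ) (hn : 3 ≤ n) (ht : 3 ≤ t) (htn : t ≤ n) :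
    dynNumC ((completeBipartiteGraph (Fin 1) (Fin n)).boxProd
        (completeBipartiteGraph (Fin 1) (Fin n))) t = n ^ 2 ∧
    dynNumC (completeBipartiteGraph (Fin 1) (Fin n)) t = n :=
  dyn_star_boxProd_star_general n t ht htn
end
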